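/- Let m ≥ 2 and let x0, x1 be distinct points of ℝ^{m+1} with ⟨x0,x0⟩_J = ⟨x1,x1⟩_J = 1. Then x1 is reachable from x0 by a spacelike geodesic — i.e. there exist u with ⟨u,u⟩_J = 1, ⟨u,x0⟩_J = 0 and t > 0 such that cos(t)·x0 + sin(t)·u = x1 — if and only if either −1 < ⟨x0,x1⟩_J < 1 (x1 lies strictly between the affine tangent hyperplanes at x0 and at −x0) or x1 = −x0. -/

import Mathlib

/-!
Along the geodesic `⟨x0, x(t)⟩_J = cos t`, so either `sin t ≠ 0` and `|⟨x0, x1⟩_J| < 1`, or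
`x1 = ±x0`. Conversely, for `c = ⟨x0, x1⟩_J ∈ (-1, 1)` the direction `u ∝ x1 - c x0` and
`t = arccos c` reach `x1`, while `-x0` is reached at `t = π` along any spacelike unit `u` that is
`J`-orthogonal to `x0`. Such a `u` exists for `m ≥ 2`: the two linear conditions `u 0 = 0` and
`⟨u, x0⟩_J = 0` leave a nonzero subspace, on which the form is positive definite.
-/

open Matrix Real

noncomputable section

/-- `J = diag(-1, I_m)` on `ℝ^{m+1}`. -/
def lorJ (m : ℕ) : Matrix (Fin (m+1)) (Fin (m+1)) ℝ :=
  Matrix.diagonal (fun i => if i = 0 then (-1 : ℝ) else 1)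

/-- The scalar product `⟨x,y⟩_J = xᵗ J y`. -/
def lorIp {m : ℕ} (x y : Fin (m+1) → ℝ) : ℝ :=
  x ⬝ᵥ (lorJ m) *ᵥ y

section LorentzProduct

variable {m : ℕ}

def lorForm (m : ℕ) : LinearMap.BilinForm ℝ (Fin (m+1) → ℝ) :=
  Matrix.toLinearMap₂' ℝ (lorJ m)

@[simp]
lemma lorForm_apply (x y : Fin (m+1) → ℝ) : lorForm m x y = lorIp x y :=
  Matrix.toLinearMap₂'_apply' _ _ _

lemma lorIp_eq_neg_add_sum (x y : Fin (m+1) → ℝ) :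
    lorIp x y = -(x 0 * y 0) + ∑ i : Fin m, x i.succ * y i.succ := by
  simp [lorIp, lorJ, mulVec_diagonal, dotProduct, Fin.sum_univ_succ]

lemma lorIp_comm (x y : Fin (m+1) → ℝ) : lorIp x y = lorIp y x := by
  simp only [lorIp_eq_neg_add_sum, mul_comm (x _)]

lemma lorIp_sub_left (x y z : Fin (m+1) → ℝ) : lorIp (x - y) z = lorIp x z - lorIp y z := by
  simp [← lorForm_apply]

lemma lorIp_smul_left (a : ℝ) (x y : Fin (m+1) → ℝ) : lorIp (a • x) y = a * lorIp x y := by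
  simp [← lorForm_apply]

lemma lorIp_add_right (x y z : Fin (m+1) → ℝ) : lorIp x (y + z) = lorIp x y + lorIp x z := by
  simp [← lorForm_apply]

lemma lorIp_sub_right (x y z : Fin (m+1) → ℝ) : lorIp x (y - z) = lorIp x y - lorIp x z := by
  simp [← lorForm_apply]

lemma lorIp_smul_right (a : ℝ) (x y : Fin (m+1) → ℝ) : lorIp x (a • y) = a * lorIp x y := by
  simp [← lorForm_apply]

lemma lorIp_self_pos_of_apply_zero_eq_zero {v : Fin (m+1) → ℝ} (hv0 : v 0 = 0) (hv : v ≠ 0) :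
    0 < lorIp v v := by
  obtain ⟨i, hi⟩ : ∃ i : Fin m, v i.succ ≠ 0 := by
    by_contra! h
    exact hv (funext fun j => Fin.cases hv0 h j)
  rw [lorIp_eq_neg_add_sum, hv0, mul_zero, neg_zero, zero_add]
  exact Finset.sum_pos' (fun j _ => mul_self_nonneg _) ⟨i, Finset.mem_univ _, mul_self_pos.2 hi⟩

lemma lorIp_inv_sqrt_smul_self {v : Fin (m+1) → ℝ} (hv : 0 < lorIp v v) :
    lorIp ((√(lorIp v v))⁻¹ • v) ((√(lorIp v v))⁻¹ • v) = 1 := by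
  simp only [lorIp_smul_left, lorIp_smul_right, ← mul_assoc, ← mul_inv, mul_self_sqrt hv.le]
  exact inv_mul_cancel₀ hv.ne'

lemma exists_lorIp_self_eq_one_lorIp_eq_zero (hm : 2 ≤ m) (x : Fin (m+1) → ℝ) :
    ∃ u : Fin (m+1) → ℝ, lorIp u u = 1 ∧ lorIp u x = 0 := by
  let f := (LinearMap.proj 0).prod ((lorForm m).flip x)
  obtain ⟨v, hv, hv_ne⟩ := Submodule.exists_mem_ne_zero_of_ne_bot <|
    f.ker_ne_bot_of_finrank_lt (by simp; omega)
  obtain ⟨hv0, hvx⟩ : v 0 = 0 ∧ lorIp v x = 0 := by simpa [f] using hv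
  exact ⟨_, lorIp_inv_sqrt_smul_self (lorIp_self_pos_of_apply_zero_eq_zero hv0 hv_ne),
    by rw [lorIp_smul_left, hvx, mul_zero]⟩

lemma lorIp_cos_smul_add_sin_smul {x u : Fin (m+1) → ℝ} (hx : lorIp x x = 1)
    (hux : lorIp u x = 0) (t : ℝ) : lorIp x (cos t • x + sin t • u) = cos t := by
  rw [lorIp_add_right, lorIp_smul_right, lorIp_smul_right, hx, lorIp_comm, hux]
  ring

lemma lorIp_cos_smul_add_sin_smul_mem_Ioo_or_eq_neg {x u : Fin (m+1) → ℝ} {t : ℝ}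
    (hx : lorIp x x = 1) (hux : lorIp u x = 0) (hne : cos t • x + sin t • u ≠ x) :
    lorIp x (cos t • x + sin t • u) ∈ Set.Ioo (-1) 1 ∨ cos t • x + sin t • u = -x := by
  rw [lorIp_cos_smul_add_sin_smul hx hux]
  by_cases hs : sin t = 0
  · have hc : cos t = 1 ∨ cos t = -1 := sq_eq_one_iff.1 (by nlinarith [sin_sq_add_cos_sq t])
    rcases hc with hc | hc
    · exact absurd (by simp [hc, hs]) hne
    · exact Or.inr (by simp [hc, hs])
  · have : cos t ^ 2 < 1 := by nlinarith [sin_sq_add_cos_sq t, sq_pos_of_ne_zero hs]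
    exact Or.inl ⟨by nlinarith, by nlinarith⟩

lemma exists_geodesic_of_lorIp_mem_Ioo {x y : Fin (m+1) → ℝ}
    (hx : lorIp x x = 1) (hy : lorIp y y = 1) (hxy : lorIp x y ∈ Set.Ioo (-1) 1) :
    ∃ u : Fin (m+1) → ℝ, lorIp u u = 1 ∧ lorIp u x = 0 ∧
      ∃ t : ℝ, 0 < t ∧ cos t • x + sin t • u = y := by
  set c := lorIp x y
  have hv : lorIp (y - c • x) (y - c • x) = 1 - c ^ 2 := by
    simp only [lorIp_sub_left, lorIp_sub_right, lorIp_smul_left, lorIp_smul_right, hx, hy,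
      lorIp_comm y x]
    ring
  have hvx : lorIp (y - c • x) x = 0 := by
    simp only [lorIp_sub_left, lorIp_smul_left, hx, lorIp_comm y x]
    ring
  have hc : 0 < 1 - c ^ 2 := by nlinarith [hxy.1, hxy.2]
  refine ⟨_, lorIp_inv_sqrt_smul_self (hv ▸ hc), by rw [lorIp_smul_left, hvx, mul_zero],
    arccos c, arccos_pos.2 hxy.2, ?_⟩
  rw [cos_arccos hxy.1.le hxy.2.le, sin_arccos, hv, smul_smul,
    mul_inv_cancel₀ (sqrt_pos.2 hc).ne', one_smul]
  abel

end LorentzProduct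

/-- For `m ≥ 2` and distinct `x0, x1 ∈ S_1^m`: `x1` is reachable from `x0` by a
spacelike geodesic if and only if either `−1 < ⟨x0,x1⟩_J < 1` (i.e. `x1` lies strictly
between the affine tangent hyperplanes at `x0` and at `−x0`) or `x1 = −x0`. -/
theorem spacelike_geodesic_reachability (m : ℕ) (hm : 2 ≤ m)
    (x0 x1 : Fin (m+1) → ℝ)
    (hx0 : lorIp x0 x0 = 1) (hx1 : lorIp x1 x1 = 1) (hne : x1 ≠ x0) :
    (∃ u : Fin (m+1) → ℝ, lorIp u u = 1 ∧ lorIp u x0 = 0 ∧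
        ∃ t : ℝ, 0 < t ∧ Real.cos t • x0 + Real.sin t • u = x1) ↔
      ((-1 < lorIp x0 x1 ∧ lorIp x0 x1 < 1) ∨ x1 = -x0) := by
  constructor
  · rintro ⟨u, -, hux, t, -, rfl⟩
    exact lorIp_cos_smul_add_sin_smul_mem_Ioo_or_eq_neg hx0 hux hne
  · rintro (hc | rfl)
    · exact exists_geodesic_of_lorIp_mem_Ioo hx0 hx1 hc
    · obtain ⟨u, huu, hux⟩ := exists_lorIp_self_eq_one_lorIp_eq_zero hm x0
      exact ⟨u, huu, hux, π, pi_pos, by simp⟩
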